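/- arXiv:2103.00107 — 4 statements merged into one kernel-verified Lean document; each statement's English description precedes it below -/
import Mathlib

section
/- For every λ ∈ [0,1), every pair of policies μ, π, and every Q : X → A → ℝ, the three expressions (1−λ)·∑_{n=1}^∞ λ^{n−1} (T^μ)^{n−1} (T^π Q), Q + (I − γλP^μ)⁻¹(T^{λμ+(1−λ)π} Q − Q), and (I − γλP^μ)⁻¹(r + γ(1−λ) P^π Q) = N_λ^{μ,π} Q are all equal (the series converge since γ < 1). -/
open scoped BigOperators

namespace RLPQL

variable {X A : Type*} [Fintype X] [Fintype A]

/-- `P` is a transition kernel: nonnegative and rows sum to one. -/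
def IsKernel (P : X → A → X → ℝ) : Prop :=
  (∀ x a y, 0 ≤ P x a y) ∧ ∀ x a, ∑ y, P x a y = 1

/-- `π` is a (Markov) policy: nonnegative and sums to one over actions. -/
def IsPolicy (π : X → A → ℝ) : Prop :=
  (∀ x a, 0 ≤ π x a) ∧ ∀ x, ∑ a, π x a = 1

/-- `(πQ)(x) = ∑_a π x a * Q x a`. -/
def polQ (π Q : X → A → ℝ) : X → ℝ := fun x => ∑ a, π x a * Q x a

/-- `(PV)(x,a) = ∑_y P x a y * V y`. -/
def PV (P : X → A → X → ℝ) (V : X → ℝ) : X → A → ℝ := fun x a => ∑ y, P x a y * V y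

/-- `P^π Q = P (π Q)`. -/
def Ppol (P : X → A → X → ℝ) (π Q : X → A → ℝ) : X → A → ℝ := PV P (polQ π Q)

/-- Bellman operator `T^π Q = r + γ P^π Q`. -/
def bellman (P : X → A → X → ℝ) (r : X → A → ℝ) (γ : ℝ) (π Q : X → A → ℝ) : X → A → ℝ :=
  fun x a => r x a + γ * Ppol P π Q x a

/-- Bellman optimality operator `(T Q)(x,a) = r x a + γ ∑_y P x a y * max_b Q y b`. -/
noncomputable def optBellman (P : X → A → X → ℝ) (r : X → A → ℝ) (γ : ℝ) (Q : X → A → ℝ) :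
    X → A → ℝ :=
  fun x a => r x a + γ * ∑ y, P x a y * (⨆ b, Q y b)

/-- `π` is greedy with respect to `Q`. -/
def IsGreedy (π Q : X → A → ℝ) : Prop := ∀ x, polQ π Q x = ⨆ a, Q x a

/-- `(I - c P^μ)⁻¹ f = ∑_{t=0}^∞ c^t (P^μ)^t f`. -/
noncomputable def resolvent (P : X → A → X → ℝ) (c : ℝ) (μ : X → A → ℝ) (f : X → A → ℝ) :
    X → A → ℝ :=
  fun x a => ∑' t : ℕ, c ^ t * ((Ppol P μ)^[t] f) x a

/-- Peng's Q(λ) operator `N_λ^{μ,π} Q = (I - γλ P^μ)⁻¹ (r + γ(1-λ) P^π Q)`. -/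
noncomputable def peng (P : X → A → X → ℝ) (r : X → A → ℝ) (γ lam : ℝ) (μ π Q : X → A → ℝ) :
    X → A → ℝ :=
  resolvent P (γ * lam) μ (fun x a => r x a + γ * (1 - lam) * Ppol P π Q x a)

/-- The mixture policy `c·μ + (1-c)·π`. -/
def mixP (c : ℝ) (μ π : X → A → ℝ) : X → A → ℝ := fun x a => c * μ x a + (1 - c) * π x a

end RLPQL

open RLPQL

section Aux

open RLPQL

variable {X A : Type*} [Fintype X] [Fintype A]

lemma abs_Ppol_le {P : X → A → X → ℝ} {μ : X → A → ℝ} (hP : IsKernel P) (hμ : IsPolicy μ)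
    {f : X → A → ℝ} {C : ℝ} (h : ∀ x a, |f x a| ≤ C) (x : X) (a : A) :
    |Ppol P μ f x a| ≤ C := by
  have hpol : ∀ y, |polQ μ f y| ≤ C := by
    intro y
    calc |∑ b, μ y b * f y b| ≤ ∑ b, |μ y b * f y b| := Finset.abs_sum_le_sum_abs _ _
      _ ≤ ∑ b, μ y b * C := by
          refine Finset.sum_le_sum fun b _ => ?_
          rw [abs_mul, abs_of_nonneg (hμ.1 y b)]
          exact mul_le_mul_of_nonneg_left (h y b) (hμ.1 y b)
      _ = C := by rw [← Finset.sum_mul, hμ.2 y, one_mul]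
  show |∑ y, P x a y * polQ μ f y| ≤ C
  calc |∑ y, P x a y * polQ μ f y| ≤ ∑ y, |P x a y * polQ μ f y| :=
        Finset.abs_sum_le_sum_abs _ _
    _ ≤ ∑ y, P x a y * C := by
        refine Finset.sum_le_sum fun y _ => ?_
        rw [abs_mul, abs_of_nonneg (hP.1 x a y)]
        exact mul_le_mul_of_nonneg_left (hpol y) (hP.1 x a y)
    _ = C := by rw [← Finset.sum_mul, hP.2 x a, one_mul]

lemma abs_iter_Ppol_le {P : X → A → X → ℝ} {μ : X → A → ℝ} (hP : IsKernel P) (hμ : IsPolicy μ)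
    {f : X → A → ℝ} {C : ℝ} (h : ∀ x a, |f x a| ≤ C) :
    ∀ n x a, |((Ppol P μ)^[n] f) x a| ≤ C := by
  intro n
  induction n with
  | zero => exact h
  | succ n ih =>
      intro x a
      rw [Function.iterate_succ_apply']
      exact abs_Ppol_le hP hμ ih x a

lemma summable_res {c : ℝ} (hc0 : 0 ≤ c) (hc1 : c < 1) {u : ℕ → ℝ} {C : ℝ}
    (h : ∀ n, |u n| ≤ C) : Summable fun n => c ^ n * u n := by
  refine Summable.of_abs (Summable.of_nonneg_of_le (fun n => abs_nonneg _) (fun n => ?_)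
    ((summable_geometric_of_lt_one hc0 hc1).mul_right C))
  rw [abs_mul, abs_pow, abs_of_nonneg hc0]
  exact mul_le_mul_of_nonneg_left (h n) (pow_nonneg hc0 n)

lemma exists_bound [Nonempty X] [Nonempty A] (f : X → A → ℝ) :
    ∃ C, 0 ≤ C ∧ ∀ x a, |f x a| ≤ C := by
  obtain ⟨p, -, hp⟩ := Finset.exists_max_image (Finset.univ : Finset (X × A))
    (fun p => |f p.1 p.2|) ⟨Classical.arbitrary _, Finset.mem_univ _⟩
  exact ⟨|f p.1 p.2|, abs_nonneg _, fun x a => hp (x, a) (Finset.mem_univ _)⟩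

lemma Ppol_apply_add (P : X → A → X → ℝ) (μ f g : X → A → ℝ) (x : X) (a : A) :
    Ppol P μ (fun y b => f y b + g y b) x a = Ppol P μ f x a + Ppol P μ g x a := by
  show (∑ y, P x a y * ∑ b, μ y b * (f y b + g y b))
      = (∑ y, P x a y * ∑ b, μ y b * f y b) + ∑ y, P x a y * ∑ b, μ y b * g y b
  rw [← Finset.sum_add_distrib]
  refine Finset.sum_congr rfl fun y _ => ?_
  rw [← mul_add, ← Finset.sum_add_distrib]
  congr 1
  exact Finset.sum_congr rfl fun b _ => by ring

lemma Ppol_apply_sub (P : X → A → X → ℝ) (μ f g : X → A → ℝ) (x : X) (a : A) :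
    Ppol P μ (fun y b => f y b - g y b) x a = Ppol P μ f x a - Ppol P μ g x a := by
  show (∑ y, P x a y * ∑ b, μ y b * (f y b - g y b))
      = (∑ y, P x a y * ∑ b, μ y b * f y b) - ∑ y, P x a y * ∑ b, μ y b * g y b
  rw [← Finset.sum_sub_distrib]
  refine Finset.sum_congr rfl fun y _ => ?_
  rw [← mul_sub, ← Finset.sum_sub_distrib]
  congr 1
  exact Finset.sum_congr rfl fun b _ => by ring

lemma Ppol_apply_smul (P : X → A → X → ℝ) (μ : X → A → ℝ) (k : ℝ) (f : X → A → ℝ)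
    (x : X) (a : A) :
    Ppol P μ (fun y b => k * f y b) x a = k * Ppol P μ f x a := by
  show (∑ y, P x a y * ∑ b, μ y b * (k * f y b)) = k * ∑ y, P x a y * ∑ b, μ y b * f y b
  rw [Finset.mul_sum]
  refine Finset.sum_congr rfl fun y _ => ?_
  rw [Finset.mul_sum, Finset.mul_sum, Finset.mul_sum]
  exact Finset.sum_congr rfl fun b _ => by ring

lemma Ppol_tsum (P : X → A → X → ℝ) (μ : X → A → ℝ) (u : ℕ → X → A → ℝ)
    (hu : ∀ y b, Summable fun t => u t y b) (x : X) (a : A) :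
    Ppol P μ (fun y b => ∑' t, u t y b) x a = ∑' t, Ppol P μ (u t) x a := by
  show (∑ y, P x a y * ∑ b, μ y b * ∑' t, u t y b)
      = ∑' t, ∑ y, P x a y * ∑ b, μ y b * u t y b
  have h2 : ∀ y, (∑ b, μ y b * ∑' t, u t y b) = ∑' t, ∑ b, μ y b * u t y b := by
    intro y
    simp_rw [← tsum_mul_left]
    exact (Summable.tsum_finsetSum fun b _ => (hu y b).mul_left _).symm
  have hsb : ∀ y, Summable fun t => ∑ b, μ y b * u t y b := fun y =>
    summable_sum fun b _ => (hu y b).mul_left _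
  simp_rw [h2, ← tsum_mul_left]
  exact (Summable.tsum_finsetSum fun y _ => (hsb y).mul_left _).symm

lemma resolvent_eq {P : X → A → X → ℝ} {μ : X → A → ℝ} [Nonempty X] [Nonempty A]
    (hP : IsKernel P) (hμ : IsPolicy μ) {c : ℝ} (hc0 : 0 ≤ c) (hc1 : c < 1)
    (f : X → A → ℝ) (x : X) (a : A) :
    resolvent P c μ f x a = f x a + c * Ppol P μ (resolvent P c μ f) x a := by
  obtain ⟨C, hC0, hC⟩ := exists_bound f
  have hsum : ∀ y b, Summable fun t : ℕ => c ^ t * ((Ppol P μ)^[t] f) y b :=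
    fun y b => summable_res hc0 hc1 (fun n => abs_iter_Ppol_le hP hμ hC n y b)
  show (∑' t : ℕ, c ^ t * ((Ppol P μ)^[t] f) x a) = _
  rw [Summable.tsum_eq_zero_add (hsum x a)]
  simp only [pow_zero, one_mul, Function.iterate_zero, id]
  congr 1
  have key : ∀ t : ℕ, c ^ (t + 1) * ((Ppol P μ)^[t + 1] f) x a
      = c * Ppol P μ (fun y b => c ^ t * ((Ppol P μ)^[t] f) y b) x a := by
    intro t
    rw [Function.iterate_succ_apply', Ppol_apply_smul, pow_succ]
    ring
  simp_rw [key]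
  rw [tsum_mul_left]
  congr 1
  exact (Ppol_tsum P μ _ hsum x a).symm

lemma fixed_unique {P : X → A → X → ℝ} {μ : X → A → ℝ} [Nonempty X] [Nonempty A]
    (hP : IsKernel P) (hμ : IsPolicy μ) {c : ℝ} (hc0 : 0 ≤ c) (hc1 : c < 1)
    {g F G : X → A → ℝ}
    (hF : ∀ x a, F x a = g x a + c * Ppol P μ F x a)
    (hG : ∀ x a, G x a = g x a + c * Ppol P μ G x a) : F = G := by
  obtain ⟨p, -, hp⟩ := Finset.exists_max_image (Finset.univ : Finset (X × A))
    (fun p => |F p.1 p.2 - G p.1 p.2|) ⟨Classical.arbitrary _, Finset.mem_univ _⟩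
  set M := |F p.1 p.2 - G p.1 p.2| with hM
  have hbd : ∀ x a, |F x a - G x a| ≤ M := fun x a => hp (x, a) (Finset.mem_univ _)
  have hD : ∀ x a, F x a - G x a = c * Ppol P μ (fun y b => F y b - G y b) x a := by
    intro x a
    rw [Ppol_apply_sub, hF, hG]
    ring
  have hMle : M ≤ c * M := by
    conv_lhs => rw [hM, hD p.1 p.2]
    rw [abs_mul, abs_of_nonneg hc0]
    exact mul_le_mul_of_nonneg_left (abs_Ppol_le hP hμ hbd p.1 p.2) hc0
  have hM0 : M ≤ 0 := by nlinarith [abs_nonneg (F p.1 p.2 - G p.1 p.2)]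
  funext x a
  have h1 : |F x a - G x a| ≤ 0 := le_trans (hbd x a) hM0
  have h2 := abs_nonpos_iff.mp h1
  linarith [sub_eq_zero.mp h2]

lemma Ppol_mix (P : X → A → X → ℝ) (lam : ℝ) (μ π Q : X → A → ℝ) (x : X) (a : A) :
    Ppol P (mixP lam μ π) Q x a
      = lam * Ppol P μ Q x a + (1 - lam) * Ppol P π Q x a := by
  show (∑ y, P x a y * ∑ b, (lam * μ y b + (1 - lam) * π y b) * Q y b)
      = lam * (∑ y, P x a y * ∑ b, μ y b * Q y b)
        + (1 - lam) * ∑ y, P x a y * ∑ b, π y b * Q y b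
  rw [Finset.mul_sum, Finset.mul_sum, ← Finset.sum_add_distrib]
  refine Finset.sum_congr rfl fun y _ => ?_
  rw [Finset.mul_sum, Finset.mul_sum, Finset.mul_sum, Finset.mul_sum, Finset.mul_sum,
    ← Finset.sum_add_distrib]
  refine Finset.sum_congr rfl fun b _ => ?_
  ring

lemma abs_bellman_iter_le {P : X → A → X → ℝ} {μ : X → A → ℝ}
    (hP : IsKernel P) (hμ : IsPolicy μ) {γ : ℝ} (hγ0 : 0 ≤ γ)
    {r f : X → A → ℝ} {K : ℝ} (hr : ∀ x a, |r x a| ≤ (1 - γ) * K) (hf : ∀ x a, |f x a| ≤ K) :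
    ∀ n x a, |((bellman P r γ μ)^[n] f) x a| ≤ K := by
  intro n
  induction n with
  | zero => exact hf
  | succ n ih =>
      intro x a
      rw [Function.iterate_succ_apply']
      show |r x a + γ * Ppol P μ ((bellman P r γ μ)^[n] f) x a| ≤ K
      have h1 := abs_Ppol_le hP hμ ih x a
      have h2 := hr x a
      calc |r x a + γ * Ppol P μ ((bellman P r γ μ)^[n] f) x a|
          ≤ |r x a| + |γ * Ppol P μ ((bellman P r γ μ)^[n] f) x a| := abs_add_le _ _
        _ ≤ (1 - γ) * K + γ * K := by
            rw [abs_mul, abs_of_nonneg hγ0]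
            exact add_le_add h2 (mul_le_mul_of_nonneg_left h1 hγ0)
        _ = K := by ring

end Aux


/-- For every `λ ∈ [0,1)`, policies `μ, π`, and `Q`, the three forms of
Peng's Q(λ) operator agree: `(1-λ) ∑_{n≥1} λ^{n-1} (T^μ)^{n-1} (T^π Q)`,
`Q + (I - γλ P^μ)⁻¹ (T^{λμ+(1-λ)π} Q - Q)` and `(I - γλ P^μ)⁻¹ (r + γ(1-λ) P^π Q)`,
and the defining series converge. -/
theorem peng_three_forms {X A : Type*} [Fintype X] [Fintype A] [Nonempty X] [Nonempty A]
    (P : X → A → X → ℝ) (r : X → A → ℝ) (γ lam : ℝ)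
    (hP : IsKernel P) (hγ0 : 0 ≤ γ) (hγ1 : γ < 1) (hlam0 : 0 ≤ lam) (hlam1 : lam < 1)
    (μ π : X → A → ℝ) (hμ : IsPolicy μ) (hπ : IsPolicy π) (Q : X → A → ℝ) :
    (∀ x a, Summable (fun n : ℕ =>
        lam ^ n * ((bellman P r γ μ)^[n] (bellman P r γ π Q)) x a)) ∧
    (∀ x a, Summable (fun t : ℕ =>
        (γ * lam) ^ t * ((Ppol P μ)^[t] (bellman P r γ (mixP lam μ π) Q - Q)) x a)) ∧
    (∀ x a, Summable (fun t : ℕ =>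
        (γ * lam) ^ t * ((Ppol P μ)^[t]
          (fun x a => r x a + γ * (1 - lam) * Ppol P π Q x a)) x a)) ∧
    (fun x a => (1 - lam) * ∑' n : ℕ,
        lam ^ n * ((bellman P r γ μ)^[n] (bellman P r γ π Q)) x a)
      = Q + resolvent P (γ * lam) μ (bellman P r γ (mixP lam μ π) Q - Q) ∧
    Q + resolvent P (γ * lam) μ (bellman P r γ (mixP lam μ π) Q - Q)
      = peng P r γ lam μ π Q := by
  have hc0 : 0 ≤ γ * lam := mul_nonneg hγ0 hlam0
  have hc1 : γ * lam < 1 := lt_of_le_of_lt (by nlinarith) hlam1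
  have h1lam : (1:ℝ) - lam ≠ 0 := by linarith
  set c := γ * lam with hc
  set g : X → A → ℝ := fun x a => r x a + γ * (1 - lam) * Ppol P π Q x a with hg
  set h : X → A → ℝ := bellman P r γ (mixP lam μ π) Q - Q with hh
  set F1 : X → A → ℝ := fun x a => (1 - lam) * ∑' n : ℕ,
      lam ^ n * ((bellman P r γ μ)^[n] (bellman P r γ π Q)) x a with hF1def
  obtain ⟨Cg, -, hCg⟩ := exists_bound g
  obtain ⟨Ch, -, hCh⟩ := exists_bound h
  have hsum3 : ∀ x a, Summable fun t : ℕ => c ^ t * ((Ppol P μ)^[t] g) x a :=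
    fun x a => summable_res hc0 hc1 fun n => abs_iter_Ppol_le hP hμ hCg n x a
  have hsum2 : ∀ x a, Summable fun t : ℕ => c ^ t * ((Ppol P μ)^[t] h) x a :=
    fun x a => summable_res hc0 hc1 fun n => abs_iter_Ppol_le hP hμ hCh n x a
  obtain ⟨C1, hC10, hC1⟩ := exists_bound (bellman P r γ π Q)
  obtain ⟨Cr, hCr0, hCr⟩ := exists_bound r
  have hγ' : (0:ℝ) < 1 - γ := by linarith
  set K := max C1 Cr / (1 - γ) with hK
  have hKmul : (1 - γ) * K = max C1 Cr := by
    rw [hK]; field_simp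
  have hKr : ∀ x a, |r x a| ≤ (1 - γ) * K := by
    intro x a
    rw [hKmul]
    exact le_trans (hCr x a) (le_max_right _ _)
  have hKf : ∀ x a, |bellman P r γ π Q x a| ≤ K := by
    intro x a
    refine le_trans (hC1 x a) (le_trans (le_max_left C1 Cr) ?_)
    rw [hK, le_div_iff₀ hγ']
    nlinarith [le_max_left C1 Cr, le_max_right C1 Cr]
  have hiterT : ∀ n x a, |((bellman P r γ μ)^[n] (bellman P r γ π Q)) x a| ≤ K :=
    abs_bellman_iter_le hP hμ hγ0 hKr hKf
  have hsum1 : ∀ x a, Summable fun n : ℕ =>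
      lam ^ n * ((bellman P r γ μ)^[n] (bellman P r γ π Q)) x a :=
    fun x a => summable_res hlam0 hlam1 fun n => hiterT n x a
  -- fixed point equations
  have hF3 : ∀ x a, resolvent P c μ g x a = g x a + c * Ppol P μ (resolvent P c μ g) x a :=
    resolvent_eq hP hμ hc0 hc1 g
  have hhx : ∀ x a, h x a = g x a + c * Ppol P μ Q x a - Q x a := by
    intro x a
    show r x a + γ * Ppol P (mixP lam μ π) Q x a - Q x a = _
    rw [Ppol_mix]
    simp only [hg, hc]
    ring
  have hQR : Q + resolvent P c μ h = fun y b => Q y b + resolvent P c μ h y b := rfl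
  have hF2 : ∀ x a, (Q + resolvent P c μ h) x a
      = g x a + c * Ppol P μ (Q + resolvent P c μ h) x a := by
    intro x a
    have e1 := resolvent_eq hP hμ hc0 hc1 h x a
    simp only [Pi.add_apply]
    rw [e1, hhx x a, hQR, Ppol_apply_add]
    ring
  have hF1 : ∀ x a, F1 x a = g x a + c * Ppol P μ F1 x a := by
    intro x a
    have hS := Summable.tsum_eq_zero_add (hsum1 x a)
    have hterm : ∀ n : ℕ,
        lam ^ (n + 1) * ((bellman P r γ μ)^[n + 1] (bellman P r γ π Q)) x a
        = lam * (lam ^ n * r x a)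
          + (γ * lam) * (lam ^ n *
              Ppol P μ ((bellman P r γ μ)^[n] (bellman P r γ π Q)) x a) := by
      intro n
      rw [Function.iterate_succ_apply']
      show lam ^ (n + 1) * (r x a
          + γ * Ppol P μ ((bellman P r γ μ)^[n] (bellman P r γ π Q)) x a) = _
      rw [pow_succ]
      ring
    have hsa : Summable fun n : ℕ => lam * (lam ^ n * r x a) :=
      ((summable_geometric_of_lt_one hlam0 hlam1).mul_right (r x a)).mul_left lam
    have hsb : Summable fun n : ℕ => (γ * lam) * (lam ^ n *
        Ppol P μ ((bellman P r γ μ)^[n] (bellman P r γ π Q)) x a) :=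
      (summable_res hlam0 hlam1 fun n => abs_Ppol_le hP hμ (hiterT n) x a).mul_left _
    have hswap : (∑' n : ℕ, lam ^ n *
          Ppol P μ ((bellman P r γ μ)^[n] (bellman P r γ π Q)) x a)
        = Ppol P μ (fun y b => ∑' n : ℕ,
            lam ^ n * ((bellman P r γ μ)^[n] (bellman P r γ π Q)) y b) x a := by
      rw [Ppol_tsum P μ _ hsum1 x a]
      exact tsum_congr fun n => (Ppol_apply_smul P μ (lam ^ n) _ x a).symm
    have hS2 : (∑' n : ℕ, lam ^ n * ((bellman P r γ μ)^[n] (bellman P r γ π Q)) x a)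
        = bellman P r γ π Q x a + (lam * ((1 - lam)⁻¹ * r x a)
          + (γ * lam) * Ppol P μ (fun y b => ∑' n : ℕ,
              lam ^ n * ((bellman P r γ μ)^[n] (bellman P r γ π Q)) y b) x a) := by
      rw [hS]
      have e0 : lam ^ 0 * ((bellman P r γ μ)^[0] (bellman P r γ π Q)) x a
          = bellman P r γ π Q x a := by simp
      rw [e0]
      congr 1
      rw [tsum_congr hterm, Summable.tsum_add hsa hsb, tsum_mul_left, tsum_mul_left,
        tsum_mul_right, tsum_geometric_of_lt_one hlam0 hlam1, hswap]
    have hA : Ppol P μ F1 x a = (1 - lam) * Ppol P μ (fun y b => ∑' n : ℕ,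
        lam ^ n * ((bellman P r γ μ)^[n] (bellman P r γ π Q)) y b) x a := by
      rw [hF1def]
      exact Ppol_apply_smul P μ (1 - lam) _ x a
    show (1 - lam) * (∑' n : ℕ,
        lam ^ n * ((bellman P r γ μ)^[n] (bellman P r γ π Q)) x a)
      = g x a + c * Ppol P μ F1 x a
    rw [hS2, hA]
    simp only [hg, hc]
    show (1 - lam) * ((r x a + γ * Ppol P π Q x a) + _) = _
    field_simp
    ring
  refine ⟨hsum1, hsum2, hsum3, ?_, ?_⟩
  · exact fixed_unique hP hμ hc0 hc1 hF1 hF2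
  · show Q + resolvent P c μ h = resolvent P c μ g
    exact fixed_unique hP hμ hc0 hc1 hF2 hF3
end

section
/- Fix λ ∈ [0,1] and a policy μ, and define N_λ^μ Q := (I − γλP^μ)⁻¹(r + γ(1−λ) P(MQ)), where (MQ)(y) := max_a Q y a (so that N_λ^μ Q = N_λ^{μ,π_Q} Q for any policy π_Q greedy with respect to Q). Then for all Q, Q' : X → A → ℝ, N_λ^μ Q − N_λ^μ Q' = (1−λ)·(I − γλP^μ)⁻¹(TQ − TQ'), and consequently ‖N_λ^μ Q − N_λ^μ Q'‖∞ ≤ β·‖Q − Q'‖∞ with β := γ(1−λ)/(1−γλ); in particular N_λ^μ has a unique fixed point. -/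
/-!
The bootstrap targets `r + γ(1-λ) P(MQ)` of `Q` and `Q'` differ by exactly `(1-λ)(TQ - TQ')`,
so linearity of the resolvent `(I - γλP^μ)⁻¹` gives the identity. Since `P^μ` averages, the
resolvent has sup-norm at most `1/(1-γλ)`, and `T` is a `γ`-contraction because `max` is
1-Lipschitz; hence `N_λ^μ` is a `γ(1-λ)/(1-γλ)`-contraction, and `γ(1-λ) < 1-γλ` because `γ < 1`.
Banach's fixed point theorem finishes.
-/

open scoped BigOperators

open RLPQL

namespace RLPQL
variable {X A : Type*} [Fintype X] [Fintype A]

/-- The operator `N_λ^μ Q := (I - γλ P^μ)⁻¹ (r + γ(1-λ) P (M Q))`, where `(MQ)(y) = max_a Q y a`. -/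
noncomputable def pengGreedy (P : X → A → X → ℝ) (r : X → A → ℝ) (γ lam : ℝ) (μ : X → A → ℝ)
    (Q : X → A → ℝ) : X → A → ℝ :=
  resolvent P (γ * lam) μ (fun x a => r x a + γ * (1 - lam) * PV P (fun y => ⨆ b, Q y b) x a)

end RLPQL

open Finset

namespace RLPQL

lemma abs_sum_mul_le_of_sum_eq_one {ι : Type*} [Fintype ι] {w v : ι → ℝ} (hw : ∀ i, 0 ≤ w i)
    (hw1 : ∑ i, w i = 1) {C : ℝ} (hv : ∀ i, |v i| ≤ C) : |∑ i, w i * v i| ≤ C :=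
  calc |∑ i, w i * v i| ≤ ∑ i, w i * C := by
        refine (abs_sum_le_sum_abs _ _).trans (sum_le_sum fun i _ => ?_)
        rw [abs_mul, abs_of_nonneg (hw i)]
        exact mul_le_mul_of_nonneg_left (hv i) (hw i)
    _ = C := by rw [← sum_mul, hw1, one_mul]

lemma ciSup_sub_ciSup_le {ι : Type*} [Finite ι] [Nonempty ι] {v w : ι → ℝ} {C : ℝ}
    (h : ∀ i, v i - w i ≤ C) : (⨆ i, v i) - ⨆ i, w i ≤ C :=
  sub_le_iff_le_add.2 <| ciSup_le fun i => by
    have := le_ciSup (Set.finite_range w).bddAbove i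
    linarith [h i]

lemma abs_ciSup_sub_ciSup_le {ι : Type*} [Finite ι] [Nonempty ι] {v w : ι → ℝ} {C : ℝ}
    (h : ∀ i, |v i - w i| ≤ C) : |(⨆ i, v i) - ⨆ i, w i| ≤ C :=
  abs_sub_le_iff.2 ⟨ciSup_sub_ciSup_le fun i => (abs_sub_le_iff.1 (h i)).1,
    ciSup_sub_ciSup_le fun i => (abs_sub_le_iff.1 (h i)).2⟩

lemma existsUnique_fixedPoint_of_norm_sub_le {E : Type*} [NormedAddCommGroup E] [CompleteSpace E]
    {f : E → E} {K : ℝ} (hK0 : 0 ≤ K) (hK1 : K < 1) (hf : ∀ x y, ‖f x - f y‖ ≤ K * ‖x - y‖) :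
    ∃! x, f x = x := by
  have hcontr : ContractingWith ⟨K, hK0⟩ f :=
    ⟨hK1, LipschitzWith.of_dist_le_mul fun x y => by rw [dist_eq_norm, dist_eq_norm]; exact hf x y⟩
  exact ⟨hcontr.fixedPoint f, hcontr.fixedPoint_isFixedPt, fun x hx => hcontr.fixedPoint_unique hx⟩

section Operators

variable {X A : Type*} [Fintype X] [Fintype A]

lemma abs_apply_le_norm (f : X → A → ℝ) (x : X) (a : A) : |f x a| ≤ ‖f‖ :=
  (Real.norm_eq_abs (f x a) ▸ norm_le_pi_norm (f x) a).trans (norm_le_pi_norm f x)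

variable (P : X → A → X → ℝ) (μ : X → A → ℝ)

def PpolLinear : Module.End ℝ (X → A → ℝ) where
  toFun := Ppol P μ
  map_add' f g := by
    funext x a
    simp only [Ppol, PV, polQ, Pi.add_apply, mul_add, sum_add_distrib]
  map_smul' k f := by
    funext x a
    simp only [Ppol, PV, polQ, Pi.smul_apply, smul_eq_mul, RingHom.id_apply, mul_sum]
    exact sum_congr rfl fun y _ => sum_congr rfl fun b _ => by ring

lemma iterate_Ppol_eq_pow (t : ℕ) : (Ppol P μ)^[t] = ⇑(PpolLinear P μ ^ t) :=
  (Module.End.coe_pow (PpolLinear P μ) t).symm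

variable {P μ} (hP : IsKernel P) (hμ : IsPolicy μ)
include hP hμ

lemma norm_Ppol_le (f : X → A → ℝ) : ‖Ppol P μ f‖ ≤ ‖f‖ := by
  refine (pi_norm_le_iff_of_nonneg (norm_nonneg f)).2 fun x =>
    (pi_norm_le_iff_of_nonneg (norm_nonneg f)).2 fun a => ?_
  rw [Real.norm_eq_abs]
  exact abs_sum_mul_le_of_sum_eq_one (hP.1 x a) (hP.2 x a) fun y =>
    abs_sum_mul_le_of_sum_eq_one (hμ.1 y) (hμ.2 y) fun b => abs_apply_le_norm f y b

lemma norm_iterate_Ppol_le (f : X → A → ℝ) (t : ℕ) : ‖(Ppol P μ)^[t] f‖ ≤ ‖f‖ := by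
  induction t with
  | zero => exact le_rfl
  | succ t ih =>
    rw [Function.iterate_succ_apply']
    exact (norm_Ppol_le hP hμ _).trans ih

variable {c : ℝ} (hc0 : 0 ≤ c) (hc1 : c < 1)
include hc0

lemma norm_resolvent_term_le (f : X → A → ℝ) (t : ℕ) :
    ‖c ^ t • (Ppol P μ)^[t] f‖ ≤ ‖f‖ * c ^ t := by
  rw [norm_smul_of_nonneg (pow_nonneg hc0 t), mul_comm]
  exact mul_le_mul_of_nonneg_right (norm_iterate_Ppol_le hP hμ f t) (pow_nonneg hc0 t)

include hc1

lemma summable_resolvent_term (f : X → A → ℝ) :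
    Summable fun t : ℕ => c ^ t • (Ppol P μ)^[t] f :=
  ((summable_geometric_of_lt_one hc0 hc1).mul_left ‖f‖).of_norm_bounded
    (norm_resolvent_term_le hP hμ hc0 f)

lemma resolvent_eq_tsum (f : X → A → ℝ) :
    resolvent P c μ f = ∑' t : ℕ, c ^ t • (Ppol P μ)^[t] f := by
  have hs := summable_resolvent_term hP hμ hc0 hc1 f
  funext x a
  rw [tsum_apply hs, tsum_apply (Pi.summable.1 hs x)]
  rfl

lemma resolvent_sub (f g : X → A → ℝ) :
    resolvent P c μ (f - g) = resolvent P c μ f - resolvent P c μ g := by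
  simp only [resolvent_eq_tsum hP hμ hc0 hc1]
  rw [← (summable_resolvent_term hP hμ hc0 hc1 f).tsum_sub
    (summable_resolvent_term hP hμ hc0 hc1 g)]
  simp only [iterate_Ppol_eq_pow, map_sub, smul_sub]

lemma resolvent_smul (k : ℝ) (f : X → A → ℝ) :
    resolvent P c μ (k • f) = k • resolvent P c μ f := by
  simp only [resolvent_eq_tsum hP hμ hc0 hc1]
  rw [← (summable_resolvent_term hP hμ hc0 hc1 f).tsum_const_smul k]
  simp only [iterate_Ppol_eq_pow, map_smul, smul_comm (c ^ _) k]

lemma norm_resolvent_le (f : X → A → ℝ) : ‖resolvent P c μ f‖ ≤ ‖f‖ / (1 - c) := by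
  rw [resolvent_eq_tsum hP hμ hc0 hc1, div_eq_mul_inv]
  exact tsum_of_norm_bounded ((hasSum_geometric_of_lt_one hc0 hc1).mul_left ‖f‖)
    (norm_resolvent_term_le hP hμ hc0 f)

end Operators

section Bellman

variable {X A : Type*} [Fintype X] [Fintype A] {P : X → A → X → ℝ} (r : X → A → ℝ) {γ : ℝ}

lemma norm_optBellman_sub_le [Nonempty A] (hP : IsKernel P) (hγ0 : 0 ≤ γ) (Q Q' : X → A → ℝ) :
    ‖optBellman P r γ Q - optBellman P r γ Q'‖ ≤ γ * ‖Q - Q'‖ := by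
  have hC : 0 ≤ γ * ‖Q - Q'‖ := mul_nonneg hγ0 (norm_nonneg _)
  refine (pi_norm_le_iff_of_nonneg hC).2 fun x => (pi_norm_le_iff_of_nonneg hC).2 fun a => ?_
  have hdiff : (optBellman P r γ Q - optBellman P r γ Q') x a
      = γ * ∑ y, P x a y * ((⨆ b, Q y b) - ⨆ b, Q' y b) := by
    simp only [optBellman, Pi.sub_apply, mul_sub, sum_sub_distrib]
    ring
  rw [Real.norm_eq_abs, hdiff, abs_mul, abs_of_nonneg hγ0]
  exact mul_le_mul_of_nonneg_left (abs_sum_mul_le_of_sum_eq_one (hP.1 x a) (hP.2 x a) fun y =>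
    abs_ciSup_sub_ciSup_le fun b => abs_apply_le_norm (Q - Q') y b) hγ0

variable {lam : ℝ} {μ : X → A → ℝ}

lemma pengGreedy_sub (hP : IsKernel P) (hμ : IsPolicy μ) (hc0 : 0 ≤ γ * lam)
    (hc1 : γ * lam < 1) (Q Q' : X → A → ℝ) :
    pengGreedy P r γ lam μ Q - pengGreedy P r γ lam μ Q'
      = (1 - lam) • resolvent P (γ * lam) μ (optBellman P r γ Q - optBellman P r γ Q') := by
  have htarget : (fun x a => r x a + γ * (1 - lam) * PV P (fun y => ⨆ b, Q y b) x a)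
      - (fun x a => r x a + γ * (1 - lam) * PV P (fun y => ⨆ b, Q' y b) x a)
      = (1 - lam) • (optBellman P r γ Q - optBellman P r γ Q') := by
    funext x a
    simp only [Pi.sub_apply, Pi.smul_apply, smul_eq_mul, optBellman, PV]
    ring
  rw [pengGreedy, pengGreedy, ← resolvent_sub hP hμ hc0 hc1, htarget,
    resolvent_smul hP hμ hc0 hc1]

lemma norm_pengGreedy_sub_le [Nonempty A] (hP : IsKernel P) (hμ : IsPolicy μ) (hγ0 : 0 ≤ γ)
    (hγ1 : γ < 1) (hlam0 : 0 ≤ lam) (hlam1 : lam ≤ 1) (Q Q' : X → A → ℝ) :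
    ‖pengGreedy P r γ lam μ Q - pengGreedy P r γ lam μ Q'‖
      ≤ γ * (1 - lam) / (1 - γ * lam) * ‖Q - Q'‖ := by
  have hc0 : 0 ≤ γ * lam := mul_nonneg hγ0 hlam0
  have hc1 : γ * lam < 1 := by nlinarith
  rw [pengGreedy_sub r hP hμ hc0 hc1, norm_smul_of_nonneg (sub_nonneg.2 hlam1)]
  calc (1 - lam) * ‖resolvent P (γ * lam) μ (optBellman P r γ Q - optBellman P r γ Q')‖
      ≤ (1 - lam) * (γ * ‖Q - Q'‖ / (1 - γ * lam)) := by
        refine mul_le_mul_of_nonneg_left ((norm_resolvent_le hP hμ hc0 hc1 _).trans ?_)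
          (sub_nonneg.2 hlam1)
        gcongr
        exact norm_optBellman_sub_le r hP hγ0 Q Q'
    _ = γ * (1 - lam) / (1 - γ * lam) * ‖Q - Q'‖ := by ring

end Bellman

end RLPQL

theorem pengGreedy_contraction_general {X A : Type*} [Fintype X] [Fintype A] [Nonempty A]
    (P : X → A → X → ℝ) (r : X → A → ℝ) (γ lam : ℝ)
    (hP : IsKernel P) (hγ0 : 0 ≤ γ) (hγ1 : γ < 1) (hlam0 : 0 ≤ lam) (hlam1 : lam ≤ 1)
    (μ : X → A → ℝ) (hμ : IsPolicy μ) :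
    (∀ Q Q' : X → A → ℝ,
        pengGreedy P r γ lam μ Q - pengGreedy P r γ lam μ Q'
          = fun x a => (1 - lam) *
              resolvent P (γ * lam) μ (optBellman P r γ Q - optBellman P r γ Q') x a) ∧
    (∀ Q Q' : X → A → ℝ,
        ‖pengGreedy P r γ lam μ Q - pengGreedy P r γ lam μ Q'‖
          ≤ (γ * (1 - lam) / (1 - γ * lam)) * ‖Q - Q'‖) ∧
    (∃! Q : X → A → ℝ, pengGreedy P r γ lam μ Q = Q) := by
  have hc0 : 0 ≤ γ * lam := mul_nonneg hγ0 hlam0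
  have hc1 : γ * lam < 1 := by nlinarith
  have hbound := norm_pengGreedy_sub_le r hP hμ hγ0 hγ1 hlam0 hlam1
  refine ⟨pengGreedy_sub r hP hμ hc0 hc1, hbound, ?_⟩
  have hd : 0 < 1 - γ * lam := by linarith
  exact existsUnique_fixedPoint_of_norm_sub_le
    (div_nonneg (mul_nonneg hγ0 (sub_nonneg.2 hlam1)) hd.le) ((div_lt_one hd).2 (by nlinarith))
    hbound

/-- `N_λ^μ Q - N_λ^μ Q' = (1-λ)(I - γλP^μ)⁻¹(TQ - TQ')`, hence
`‖N_λ^μ Q - N_λ^μ Q'‖∞ ≤ β ‖Q - Q'‖∞` with `β = γ(1-λ)/(1-γλ)`; in particular `N_λ^μ`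
has a unique fixed point. -/
theorem pengGreedy_contraction {X A : Type*} [Fintype X] [Fintype A] [Nonempty X] [Nonempty A]
    (P : X → A → X → ℝ) (r : X → A → ℝ) (γ lam : ℝ)
    (hP : IsKernel P) (hγ0 : 0 ≤ γ) (hγ1 : γ < 1) (hlam0 : 0 ≤ lam) (hlam1 : lam ≤ 1)
    (μ : X → A → ℝ) (hμ : IsPolicy μ) :
    (∀ Q Q' : X → A → ℝ,
        pengGreedy P r γ lam μ Q - pengGreedy P r γ lam μ Q'
          = fun x a => (1 - lam) *
              resolvent P (γ * lam) μ (optBellman P r γ Q - optBellman P r γ Q') x a) ∧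
    (∀ Q Q' : X → A → ℝ,
        ‖pengGreedy P r γ lam μ Q - pengGreedy P r γ lam μ Q'‖
          ≤ (γ * (1 - lam) / (1 - γ * lam)) * ‖Q - Q'‖) ∧
    (∃! Q : X → A → ℝ, pengGreedy P r γ lam μ Q = Q) :=
  pengGreedy_contraction_general P r γ lam hP hγ0 hγ1 hlam0 hlam1 μ hμ
end

section
/- Fix λ ∈ [0,1] and a policy μ. Let Q_f be the unique fixed point of λT^μ + (1−λ)T and let π_f be any policy greedy with respect to Q_f. Then Q_f = Q^{λμ+(1−λ)π_f}, π_f is greedy with respect to Q^{λμ+(1−λ)π_f}, and Q^{λμ+(1−λ)π_f} ≥ Q^{λμ+(1−λ)π} pointwise for every policy π. -/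
open scoped BigOperators

open RLPQL

namespace RLAux

variable {X A : Type*} [Fintype X] [Fintype A]

lemma mix_isPolicy {c : ℝ} (hc0 : 0 ≤ c) (hc1 : c ≤ 1) {μ π : X → A → ℝ}
    (hμ : IsPolicy μ) (hπ : IsPolicy π) : IsPolicy (mixP c μ π) := by
  constructor
  · intro x a
    have h1 := hμ.1 x a; have h2 := hπ.1 x a
    unfold mixP; nlinarith
  · intro x
    simp [mixP, Finset.sum_add_distrib, ← Finset.mul_sum, hμ.2 x, hπ.2 x]

lemma polQ_mix (c : ℝ) (μ π Q : X → A → ℝ) (x : X) :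
    polQ (mixP c μ π) Q x = c * polQ μ Q x + (1 - c) * polQ π Q x := by
  simp [polQ, mixP, add_mul, Finset.sum_add_distrib, Finset.mul_sum, mul_assoc]

lemma bellman_mix (P : X → A → X → ℝ) (r : X → A → ℝ) (γ c : ℝ) (μ π Q : X → A → ℝ)
    (x : X) (a : A) :
    bellman P r γ (mixP c μ π) Q x a
      = c * bellman P r γ μ Q x a + (1 - c) * bellman P r γ π Q x a := by
  have h : Ppol P (mixP c μ π) Q x a = c * Ppol P μ Q x a + (1 - c) * Ppol P π Q x a := by
    simp only [Ppol, PV, polQ_mix, mul_add, Finset.sum_add_distrib, Finset.mul_sum]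
    congr 1 <;> (apply Finset.sum_congr rfl; intro y _; ring)
  simp only [bellman, h]; ring

lemma polQ_le_sup {π : X → A → ℝ} (hπ : IsPolicy π) [Nonempty A] (Q : X → A → ℝ) (x : X) :
    polQ π Q x ≤ ⨆ a, Q x a := by
  have hb : BddAbove (Set.range fun a => Q x a) := (Set.finite_range _).bddAbove
  calc polQ π Q x = ∑ a, π x a * Q x a := rfl
    _ ≤ ∑ a, π x a * (⨆ b, Q x b) := by
        apply Finset.sum_le_sum
        intro a _
        exact mul_le_mul_of_nonneg_left (le_ciSup hb a) (hπ.1 x a)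
    _ = ⨆ b, Q x b := by rw [← Finset.sum_mul, hπ.2 x, one_mul]

/-- Comparison lemma: if `Q ≤ T^σ Q` and `T^σ Q' ≤ Q'` pointwise, then `Q ≤ Q'`. -/
lemma bellman_compare [Nonempty X] [Nonempty A]
    {P : X → A → X → ℝ} (hP : IsKernel P) (r : X → A → ℝ) {γ : ℝ} (hγ0 : 0 ≤ γ) (hγ1 : γ < 1)
    {σ : X → A → ℝ} (hσ : IsPolicy σ) {Q Q' : X → A → ℝ}
    (hQ : ∀ x a, Q x a ≤ bellman P r γ σ Q x a)
    (hQ' : ∀ x a, bellman P r γ σ Q' x a ≤ Q' x a) :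
    ∀ x a, Q x a ≤ Q' x a := by
  set D : ℝ := Finset.univ.sup' Finset.univ_nonempty
      (fun p : X × A => Q p.1 p.2 - Q' p.1 p.2) with hD
  have hbound : ∀ x a, Q x a - Q' x a ≤ D := fun x a =>
    Finset.le_sup' (fun p : X × A => Q p.1 p.2 - Q' p.1 p.2) (Finset.mem_univ (x, a))
  have hpol : ∀ y, polQ σ Q y - polQ σ Q' y ≤ D := by
    intro y
    have : polQ σ Q y - polQ σ Q' y = ∑ a, σ y a * (Q y a - Q' y a) := by
      simp [polQ, mul_sub, Finset.sum_sub_distrib]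
    rw [this]
    calc ∑ a, σ y a * (Q y a - Q' y a) ≤ ∑ a, σ y a * D := by
          apply Finset.sum_le_sum
          intro a _
          exact mul_le_mul_of_nonneg_left (hbound y a) (hσ.1 y a)
      _ = D := by rw [← Finset.sum_mul, hσ.2 y, one_mul]
  have hPp : ∀ x a, Ppol P σ Q x a - Ppol P σ Q' x a ≤ D := by
    intro x a
    have : Ppol P σ Q x a - Ppol P σ Q' x a = ∑ y, P x a y * (polQ σ Q y - polQ σ Q' y) := by
      simp [Ppol, PV, mul_sub, Finset.sum_sub_distrib]
    rw [this]
    calc ∑ y, P x a y * (polQ σ Q y - polQ σ Q' y) ≤ ∑ y, P x a y * D := by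
          apply Finset.sum_le_sum
          intro y _
          exact mul_le_mul_of_nonneg_left (hpol y) (hP.1 x a y)
      _ = D := by rw [← Finset.sum_mul, hP.2 x a, one_mul]
  have hDle : D ≤ γ * D := by
    obtain ⟨p, -, hp⟩ := Finset.exists_mem_eq_sup' (Finset.univ_nonempty (α := X × A))
      (fun p : X × A => Q p.1 p.2 - Q' p.1 p.2)
    have hpD : D = Q p.1 p.2 - Q' p.1 p.2 := by rw [hD, hp]
    calc D = Q p.1 p.2 - Q' p.1 p.2 := hpD
      _ ≤ bellman P r γ σ Q p.1 p.2 - bellman P r γ σ Q' p.1 p.2 := by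
          have := hQ p.1 p.2; have := hQ' p.1 p.2; linarith
      _ = γ * (Ppol P σ Q p.1 p.2 - Ppol P σ Q' p.1 p.2) := by
          simp [bellman]; ring
      _ ≤ γ * D := mul_le_mul_of_nonneg_left (hPp p.1 p.2) hγ0
  have hD0 : D ≤ 0 := by nlinarith
  intro x a
  have := hbound x a
  linarith

end RLAux

open RLAux

/-- Let `Q_f` be the (unique) fixed point of `λT^μ + (1-λ)T` and `π_f` any
greedy policy w.r.t. `Q_f`. Then `Q_f = Q^{λμ+(1-λ)π_f}`, `π_f` is greedy w.r.t. this
Q-function, and `Q^{λμ+(1-λ)π_f} ≥ Q^{λμ+(1-λ)π}` pointwise for every policy `π`.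
Here `Qof π` denotes the unique fixed point of `T^π` (supplied through `hQof`). -/
theorem fixedPoint_is_best_mixture {X A : Type*} [Fintype X] [Fintype A] [Nonempty X] [Nonempty A]
    (P : X → A → X → ℝ) (r : X → A → ℝ) (γ lam : ℝ)
    (hP : IsKernel P) (hγ0 : 0 ≤ γ) (hγ1 : γ < 1) (hlam0 : 0 ≤ lam) (hlam1 : lam ≤ 1)
    (μ : X → A → ℝ) (hμ : IsPolicy μ)
    (Qof : (X → A → ℝ) → (X → A → ℝ))
    (hQof : ∀ π : X → A → ℝ, IsPolicy π → bellman P r γ π (Qof π) = Qof π)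
    (Qf : X → A → ℝ)
    (hQf : (fun x a => lam * bellman P r γ μ Qf x a + (1 - lam) * optBellman P r γ Qf x a) = Qf)
    (πf : X → A → ℝ) (hπf : IsPolicy πf) (hgreedy : IsGreedy πf Qf) :
    Qf = Qof (mixP lam μ πf) ∧
    IsGreedy πf (Qof (mixP lam μ πf)) ∧
    ∀ π : X → A → ℝ, IsPolicy π → Qof (mixP lam μ π) ≤ Qof (mixP lam μ πf) := by
  have hσf : IsPolicy (mixP lam μ πf) := mix_isPolicy hlam0 hlam1 hμ hπf
  have hopt : ∀ x a, bellman P r γ πf Qf x a = optBellman P r γ Qf x a := by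
    intro x a
    simp only [bellman, optBellman, Ppol, PV]
    congr 2
    apply Finset.sum_congr rfl; intro y _
    rw [hgreedy y]
  have hfix : ∀ x a, bellman P r γ (mixP lam μ πf) Qf x a = Qf x a := by
    intro x a
    rw [bellman_mix, hopt]
    exact congrFun (congrFun hQf x) a
  have hfixQof := hQof (mixP lam μ πf) hσf
  have h1 : ∀ x a, Qf x a ≤ Qof (mixP lam μ πf) x a :=
    bellman_compare hP r hγ0 hγ1 hσf (fun x a => (hfix x a).ge)
      (fun x a => (congrFun (congrFun hfixQof x) a).le)
  have h2 : ∀ x a, Qof (mixP lam μ πf) x a ≤ Qf x a :=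
    bellman_compare hP r hγ0 hγ1 hσf (fun x a => (congrFun (congrFun hfixQof x) a).ge)
      (fun x a => (hfix x a).le)
  have heq : Qf = Qof (mixP lam μ πf) := by
    funext x a; exact le_antisymm (h1 x a) (h2 x a)
  refine ⟨heq, ?_, ?_⟩
  · rw [← heq]; exact hgreedy
  · intro π hπ
    have hσ : IsPolicy (mixP lam μ π) := mix_isPolicy hlam0 hlam1 hμ hπ
    have hsub : ∀ x a, bellman P r γ (mixP lam μ π) Qf x a ≤ Qf x a := by
      intro x a
      rw [bellman_mix]
      have hb : bellman P r γ π Qf x a ≤ optBellman P r γ Qf x a := by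
        simp only [bellman, optBellman]
        have hPp : Ppol P π Qf x a ≤ ∑ y, P x a y * (⨆ b, Qf y b) := by
          apply Finset.sum_le_sum
          intro y _
          exact mul_le_mul_of_nonneg_left (polQ_le_sup hπ Qf y) (hP.1 x a y)
        nlinarith
      have hQfxa := congrFun (congrFun hQf x) a
      nlinarith
    have hle : ∀ x a, Qof (mixP lam μ π) x a ≤ Qf x a :=
      bellman_compare hP r hγ0 hγ1 hσ
        (fun x a => (congrFun (congrFun (hQof (mixP lam μ π) hσ) x) a).ge)
        hsub
    rw [← heq]
    exact fun x a => hle x a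
end

section
/- (Proposition 1, oscillation of Harutyunyan's Q(λ) with a fixed behavior policy.) In the chain MDP described in the context, with γ ∈ (1/2, 1), behavior policy μ choosing 'go' everywhere, λ = 1, and initial Q-function Q_0 equal to Q^μ except Q_0(chain i, go) := Q^μ(chain i, go) + δ with a fixed δ > 2/(1−γ), consider the HQL iterates Q_{k+1} := Q_k + ∑_{t=0}^∞ γ^t (P^μ)^t (T^{π_k} Q_k − Q_k), where π_k is the greedy (deterministic) policy with respect to Q_k (choosing 'go' at ties). Then all the defining series converge, and for every k ≥ 0: Q_{2k+1} = Q^μ (so Q_{2k+1}(chain i, exit) > Q_{2k+1}(chain i, go) for all i, i.e. the greedy action is the optimal action 'exit'), while Q_{2k+2}(chain i, go) = Q^μ(chain i, go) + 2γ/(1−γ)² > Q_{2k+2}(chain i, exit) = Q^μ(chain i, exit) for all i (i.e. the greedy action is the sub-optimal action 'go'). In particular the iterates Q_k oscillate between two distinct functions and the greedy policies oscillate between optimal and sub-optimal policies. -/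
namespace ChainMDP

/-- The two actions. -/
inductive Act | go | exit
  deriving DecidableEq

/-- States: `Sum.inl i` are the chain states, `Sum.inr i` the absorbing states. -/
abbrev S : Type := ℕ ⊕ ℕ

/-- Deterministic transitions: from chain state `i`, `go` leads to chain state `i+1` and
`exit` to absorbing state `i`; absorbing states loop to themselves. -/
def step : S → Act → S
  | Sum.inl i, Act.go => Sum.inl (i + 1)
  | Sum.inl i, Act.exit => Sum.inr i
  | Sum.inr i, _ => Sum.inr i

/-- Rewards: `-1` for `go` at a chain state, `1` for `exit` at a chain state, and `1` at
absorbing states. -/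
def rew : S → Act → ℝ
  | Sum.inl _, Act.go => -1
  | Sum.inl _, Act.exit => 1
  | Sum.inr _, _ => 1

/-- `P^π Q (x, a) = (π Q)(x')` where `x'` is the deterministic successor of `(x,a)`. -/
def PpolD (π : S → Act) (Q : S → Act → ℝ) : S → Act → ℝ :=
  fun x a => Q (step x a) (π (step x a))

/-- The Bellman operator `T^π Q = rew + γ P^π Q`. -/
def bellmanD (γ : ℝ) (π : S → Act) (Q : S → Act → ℝ) : S → Act → ℝ :=
  fun x a => rew x a + γ * PpolD π Q x a

/-- The behavior policy `μ` choosing `go` everywhere. -/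
def muGo : S → Act := fun _ => Act.go

/-- `Q^μ`, the unique bounded fixed point of `T^μ`: explicitly
`Q^μ(chain i, go) = -1/(1-γ)`, `Q^μ(chain i, exit) = 1/(1-γ)`,
`Q^μ(absorbing i, ·) = 1/(1-γ)`. -/
noncomputable def Qmu (γ : ℝ) : S → Act → ℝ
  | Sum.inl _, Act.go => -1 / (1 - γ)
  | Sum.inl _, Act.exit => 1 / (1 - γ)
  | Sum.inr _, _ => 1 / (1 - γ)

/-- The initial Q-function: `Q^μ` everywhere except `Q_0(chain i, go) = Q^μ(chain i, go) + δ`. -/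
noncomputable def Qinit (γ δ : ℝ) : S → Act → ℝ
  | Sum.inl _, Act.go => -1 / (1 - γ) + δ
  | x, a => Qmu γ x a

/-- The greedy (deterministic) policy with respect to `Q`, choosing `go` at ties. -/
noncomputable def greedyOf (Q : S → Act → ℝ) : S → Act :=
  fun x => if Q x Act.exit > Q x Act.go then Act.exit else Act.go

/-- HQL iterates with `λ = 1` and fixed behavior policy `μ = go`:
`Q_{k+1} = Q_k + ∑_{t≥0} γ^t (P^μ)^t (T^{π_k} Q_k - Q_k)` with `π_k` greedy w.r.t. `Q_k`. -/
noncomputable def hql (γ δ : ℝ) : ℕ → (S → Act → ℝ)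
  | 0 => Qinit γ δ
  | k + 1 => fun x a => hql γ δ k x a +
      ∑' t : ℕ, γ ^ t *
        ((PpolD muGo)^[t] (bellmanD γ (greedyOf (hql γ δ k)) (hql γ δ k) - hql γ δ k)) x a

end ChainMDP

open ChainMDP

namespace HQLAux

/-- Indicator of (chain state, go). -/
noncomputable def eFn : S → Act → ℝ
  | Sum.inl _, Act.go => 1
  | _, _ => 0

/-- `Qmu` perturbed by `c` at (chain, go). -/
noncomputable def Qpert (γ c : ℝ) : S → Act → ℝ :=
  fun x a => Qmu γ x a + c * eFn x a

/-- The optimal-looking policy: exit at chain states. -/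
def piStar : S → Act
  | Sum.inl _ => Act.exit
  | Sum.inr _ => Act.go

lemma Pfix (d : ℝ) :
    PpolD muGo (fun x a => d * eFn x a) = fun x a => d * eFn x a := by
  funext x a
  cases x <;> cases a <;> simp [PpolD, muGo, step, eFn]

lemma iterfix (d : ℝ) (t : ℕ) :
    (PpolD muGo)^[t] (fun x a => d * eFn x a) = fun x a => d * eFn x a :=
  Function.iterate_fixed (Pfix d) t

lemma greedy_pert {γ c : ℝ} (h1γ : 0 < 1 - γ) (hc : 2 / (1 - γ) < c) :
    greedyOf (Qpert γ c) = muGo := by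
  have h2 : 2 / (1 - γ) = 1 / (1 - γ) + 1 / (1 - γ) := by ring
  funext x
  cases x with
  | inl i =>
    have : ¬ (Qpert γ c (Sum.inl i) Act.exit > Qpert γ c (Sum.inl i) Act.go) := by
      simp only [Qpert, Qmu, eFn, mul_one, mul_zero, add_zero, not_lt]
      rw [h2] at hc
      have : -1 / (1 - γ) = -(1 / (1 - γ)) := by ring
      linarith [this ▸ le_refl (-1 / (1 - γ))]
    simp [greedyOf, this, muGo]
  | inr i =>
    have : ¬ (Qpert γ c (Sum.inr i) Act.exit > Qpert γ c (Sum.inr i) Act.go) := by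
      simp [Qpert, Qmu, eFn]
    simp [greedyOf, this, muGo]

lemma bd_pert {γ : ℝ} (h1γ : (1 : ℝ) - γ ≠ 0) (c : ℝ) :
    bellmanD γ muGo (Qpert γ c) - Qpert γ c = fun x a => ((γ - 1) * c) * eFn x a := by
  funext x a
  cases x <;> cases a <;>
    · simp only [Pi.sub_apply, bellmanD, PpolD, muGo, step, rew, Qpert, Qmu, eFn]
      field_simp
      try ring

lemma greedy_mu {γ : ℝ} (h1γ : 0 < 1 - γ) : greedyOf (Qmu γ) = piStar := by
  have hpos : 0 < 1 / (1 - γ) := by positivity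
  funext x
  cases x with
  | inl i =>
    have : Qmu γ (Sum.inl i) Act.exit > Qmu γ (Sum.inl i) Act.go := by
      simp only [Qmu]
      have : -1 / (1 - γ) = -(1 / (1 - γ)) := by ring
      rw [this]; linarith
    simp [greedyOf, this, piStar]
  | inr i =>
    have : ¬ (Qmu γ (Sum.inr i) Act.exit > Qmu γ (Sum.inr i) Act.go) := by simp [Qmu]
    simp [greedyOf, this, piStar]

lemma bd_mu {γ : ℝ} (h1γ : (1 : ℝ) - γ ≠ 0) :
    bellmanD γ piStar (Qmu γ) - Qmu γ = fun x a => (2 * γ / (1 - γ)) * eFn x a := by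
  funext x a
  cases x <;> cases a <;>
    · simp only [Pi.sub_apply, bellmanD, PpolD, piStar, step, rew, Qmu, eFn]
      field_simp
      try ring

lemma tsum_geom {γ : ℝ} (hγ0 : 0 ≤ γ) (hγ1 : γ < 1) (C : ℝ) :
    ∑' t : ℕ, γ ^ t * C = (1 - γ)⁻¹ * C := by
  rw [tsum_mul_right, tsum_geometric_of_lt_one hγ0 hγ1, mul_comm]

lemma hql_succ (γ δ : ℝ) (n : ℕ) :
    hql γ δ (n + 1) = fun x a => hql γ δ n x a +
      ∑' t : ℕ, γ ^ t *
        ((PpolD muGo)^[t] (bellmanD γ (greedyOf (hql γ δ n)) (hql γ δ n) - hql γ δ n)) x a :=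
  rfl

lemma stepA {γ δ c : ℝ} (hγ0 : 0 ≤ γ) (hγ1 : γ < 1) {n : ℕ}
    (hn : hql γ δ n = Qpert γ c) (hc : 2 / (1 - γ) < c) :
    hql γ δ (n + 1) = Qmu γ := by
  have h1γ : 0 < 1 - γ := by linarith
  funext x a
  rw [hql_succ, hn, greedy_pert h1γ hc, bd_pert h1γ.ne' c]
  simp only [iterfix]
  rw [tsum_geom hγ0 hγ1]
  simp only [Qpert]
  have : (1 - γ)⁻¹ * ((γ - 1) * c * eFn x a) = -(c * eFn x a) := by
    field_simp
    ring
  rw [this]; ring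

lemma stepB {γ δ : ℝ} (hγ0 : 0 ≤ γ) (hγ1 : γ < 1) {n : ℕ}
    (hn : hql γ δ n = Qmu γ) :
    hql γ δ (n + 1) = Qpert γ (2 * γ / (1 - γ) ^ 2) := by
  have h1γ : 0 < 1 - γ := by linarith
  funext x a
  rw [hql_succ, hn, greedy_mu h1γ, bd_mu h1γ.ne']
  simp only [iterfix]
  rw [tsum_geom hγ0 hγ1]
  simp only [Qpert]
  have h : (1 - γ)⁻¹ * (2 * γ / (1 - γ)) = 2 * γ / (1 - γ) ^ 2 := by
    rw [pow_two]; field_simp; try ring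
  rw [← mul_assoc, h]

lemma vc_gt {γ : ℝ} (hγ0 : 1 / 2 < γ) (hγ1 : γ < 1) :
    2 / (1 - γ) < 2 * γ / (1 - γ) ^ 2 := by
  have h1γ : 0 < 1 - γ := by linarith
  rw [div_lt_div_iff₀ h1γ (by positivity)]
  nlinarith

lemma hql_zero {γ δ : ℝ} : hql γ δ 0 = Qpert γ δ := by
  funext x a
  cases x <;> cases a <;> simp [hql, Qinit, Qmu, Qpert, eFn]

lemma main {γ δ : ℝ} (hγ0 : 1 / 2 < γ) (hγ1 : γ < 1) (hδ : 2 / (1 - γ) < δ) :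
    ∀ k : ℕ, hql γ δ (2 * k + 1) = Qmu γ ∧
      hql γ δ (2 * k + 2) = Qpert γ (2 * γ / (1 - γ) ^ 2) := by
  have hγ0' : (0 : ℝ) ≤ γ := by linarith
  intro k
  induction k with
  | zero =>
    have h1 : hql γ δ 1 = Qmu γ := stepA hγ0' hγ1 hql_zero hδ
    exact ⟨h1, stepB hγ0' hγ1 h1⟩
  | succ k ih =>
    have e1 : 2 * (k + 1) + 1 = (2 * k + 2) + 1 := by ring
    have h1 : hql γ δ (2 * (k + 1) + 1) = Qmu γ := by
      rw [e1]; exact stepA hγ0' hγ1 ih.2 (vc_gt hγ0 hγ1)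
    exact ⟨h1, stepB hγ0' hγ1 h1⟩

end HQLAux

open HQLAux

/-- **Proposition 1.** In the chain MDP with `γ ∈ (1/2, 1)`, `λ = 1`,
behavior policy `go` everywhere, and `Q_0 = Q^μ` except `Q_0(chain i, go) = Q^μ(chain i, go) + δ`
with `δ > 2/(1-γ)`, all defining series of the HQL iterates converge, the odd iterates equal
`Q^μ` (whose greedy action at chain states is the optimal action `exit`), while the even
iterates `Q_{2k+2}` satisfy `Q_{2k+2}(chain i, go) = Q^μ(chain i, go) + 2γ/(1-γ)²`,
`Q_{2k+2}(chain i, exit) = Q^μ(chain i, exit)`, and `go` is greedy (sub-optimal): the iterates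
oscillate between two functions and the greedy policies between optimal and sub-optimal. -/
theorem hql_oscillates (γ δ : ℝ) (hγ0 : 1 / 2 < γ) (hγ1 : γ < 1) (hδ : 2 / (1 - γ) < δ) :
    (∀ k x a, Summable (fun t : ℕ => γ ^ t *
        ((PpolD muGo)^[t]
          (bellmanD γ (greedyOf (hql γ δ k)) (hql γ δ k) - hql γ δ k)) x a)) ∧
    (∀ k : ℕ, hql γ δ (2 * k + 1) = Qmu γ) ∧
    (∀ (k i : ℕ), hql γ δ (2 * k + 1) (Sum.inl i) Act.go
        < hql γ δ (2 * k + 1) (Sum.inl i) Act.exit) ∧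
    (∀ (k i : ℕ), hql γ δ (2 * k + 2) (Sum.inl i) Act.go
        = Qmu γ (Sum.inl i) Act.go + 2 * γ / (1 - γ) ^ 2) ∧
    (∀ (k i : ℕ), hql γ δ (2 * k + 2) (Sum.inl i) Act.exit = Qmu γ (Sum.inl i) Act.exit) ∧
    (∀ (k i : ℕ), hql γ δ (2 * k + 2) (Sum.inl i) Act.exit
        < hql γ δ (2 * k + 2) (Sum.inl i) Act.go) := by
  have hγ0' : (0 : ℝ) ≤ γ := by linarith
  have h1γ : (0 : ℝ) < 1 - γ := by linarith
  have hm := main hγ0 hγ1 hδ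
  have hc' := vc_gt hγ0 hγ1
  -- shape of all iterates
  have shape : ∀ k : ℕ, (∃ c, 2 / (1 - γ) < c ∧ hql γ δ k = Qpert γ c) ∨ hql γ δ k = Qmu γ := by
    intro k
    match k with
    | 0 => exact Or.inl ⟨δ, hδ, hql_zero⟩
    | k + 1 =>
      rcases Nat.even_or_odd k with ⟨m, hmk⟩ | ⟨m, hmk⟩
      · right
        have : k + 1 = 2 * m + 1 := by omega
        rw [this]; exact (hm m).1
      · left
        refine ⟨2 * γ / (1 - γ) ^ 2, hc', ?_⟩
        have : k + 1 = 2 * m + 2 := by omega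
        rw [this]; exact (hm m).2
    -- summability
  refine ⟨?_, fun k => (hm k).1, ?_, ?_, ?_, ?_⟩
  · intro k x a
    rcases shape k with ⟨c, hc, hk⟩ | hk
    · rw [hk, greedy_pert h1γ hc, bd_pert h1γ.ne' c]
      simp only [iterfix]
      exact (summable_geometric_of_lt_one hγ0' hγ1).mul_right _
    · rw [hk, greedy_mu h1γ, bd_mu h1γ.ne']
      simp only [iterfix]
      exact (summable_geometric_of_lt_one hγ0' hγ1).mul_right _
  · intro k i
    rw [(hm k).1]
    have hpos : 0 < 1 / (1 - γ) := by positivity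
    simp only [Qmu]
    have : -1 / (1 - γ) = -(1 / (1 - γ)) := by ring
    rw [this]; linarith
  · intro k i
    rw [(hm k).2]
    simp [Qpert, Qmu, eFn]
  · intro k i
    rw [(hm k).2]
    simp [Qpert, Qmu, eFn]
  · intro k i
    rw [(hm k).2]
    simp only [Qpert, Qmu, eFn, mul_one, mul_zero, add_zero]
    have h2 : 2 / (1 - γ) = 1 / (1 - γ) + 1 / (1 - γ) := by ring
    rw [h2] at hc'
    have : -1 / (1 - γ) = -(1 / (1 - γ)) := by ring
    rw [this]; linarith
end
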